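/- Let G be a pro-2-group generated by involutions with H^2(G, Q_2/Z_2) = 0. Then the connecting map H^1(G, Q_2/Z_2) → H^2(G, Z/2Z) arising from the exact sequence 0 → Z/2Z → Q_2/Z_2 → Q_2/Z_2 → 0 (multiplication by 2) is an isomorphism, and the multiplication-by-2 map on H^1(G, Q_2/Z_2) is zero. -/

import Mathlib

/-! Statement 2: the connecting map H¹(G,ℚ₂/ℤ₂) → H²(G,ℤ/2ℤ) for the sequence
0 → ℤ/2ℤ → ℚ₂/ℤ₂ →(×2) ℚ₂/ℤ₂ → 0 is an isomorphism, and multiplication by 2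
is zero on H¹(G,ℚ₂/ℤ₂), for a pro-2-group G generated by involutions with
H²(G,ℚ₂/ℤ₂) = 0. -/

namespace GCoh

variable {G : Type*} [Group G] [TopologicalSpace G]
variable {A : Type*} [AddCommGroup A] [TopologicalSpace A]

/-- Inhomogeneous differential for continuous cochains, trivial action. -/
def d (n : ℕ) (f : (Fin n → G) → A) : (Fin (n+1) → G) → A :=
  fun g =>
    f (fun i => g i.succ)
      + ∑ i : Fin n, ((-1 : ℤ) ^ ((i : ℕ) + 1)) •
          f (fun j => if (j : ℕ) < (i : ℕ) then g j.castSucc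
                      else if (j : ℕ) = (i : ℕ) then g i.castSucc * g i.succ
                      else g j.succ)
      + ((-1 : ℤ) ^ (n + 1)) • f (fun i => g i.castSucc)

/-- A continuous `n`-cocycle (trivial action). -/
def IsCocycle (n : ℕ) (f : (Fin n → G) → A) : Prop :=
  Continuous f ∧ d n f = 0

/-- A continuous `n`-coboundary (trivial action). -/
def IsCoboundary : (n : ℕ) → ((Fin n → G) → A) → Prop
  | 0, f => f = 0
  | (n+1), f => ∃ h : (Fin n → G) → A, Continuous h ∧ d n h = f

/-- Pullback of cochains along a homomorphism. -/
def pull {G' : Type*} [Group G'] (φ : G' →* G) (n : ℕ) (f : (Fin n → G) → A) :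
    (Fin n → G') → A :=
  fun v => f (fun i => φ (v i))

/-- A pro-`p` group: a profinite group all of whose finite quotients are `p`-groups. -/
def IsProP (p : ℕ) (G : Type*) [Group G] [TopologicalSpace G] : Prop :=
  CompactSpace G ∧ T2Space G ∧ TotallyDisconnectedSpace G ∧ IsTopologicalGroup G ∧
    ∀ U : Subgroup G, U.Normal → IsOpen (U : Set G) → ∃ n : ℕ, Nat.card (G ⧸ U) = p ^ n

/-- `G` is topologically generated by its involutions. -/
def GeneratedByInvolutions (G : Type*) [Group G] [TopologicalSpace G] : Prop :=
  closure ((Subgroup.closure {g : G | g ^ 2 = 1} : Subgroup G) : Set G) = Set.univ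

end GCoh

open GCoh

/-- The discrete module `ℚ₂/ℤ₂`. -/
noncomputable abbrev Q2Z2 := ℚ_[2] ⧸ (PadicInt.Coe.ringHom (p := 2)).toAddMonoidHom.range

/-- The class of `1/2`, a generator of the `2`-torsion of `ℚ₂/ℤ₂`. -/
noncomputable def halfClass : Q2Z2 := QuotientAddGroup.mk ((2 : ℚ_[2])⁻¹)

/-- The inclusion `ℤ/2ℤ ↪ ℚ₂/ℤ₂` onto the 2-torsion subgroup. -/
noncomputable def iota : ZMod 2 →+ Q2Z2 :=
  ZMod.lift 2 ⟨(zmultiplesHom Q2Z2) halfClass, by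
    show (2 : ℤ) • halfClass = 0
    rw [halfClass, ← QuotientAddGroup.mk_zsmul, QuotientAddGroup.eq_zero_iff]
    refine ⟨(1 : ℤ_[2]), ?_⟩
    show ((1 : ℤ_[2]) : ℚ_[2]) = (2 : ℤ) • ((2 : ℚ_[2])⁻¹)
    rw [zsmul_eq_mul]; push_cast; norm_num⟩


/-! With trivial coefficients a continuous 1-cocycle is a continuous homomorphism, and on a group
topologically generated by involutions a continuous homomorphism to a discrete group that kills
the involutions is trivial. Twice a homomorphism kills every involution `g`, since
`2 φ(g) = φ(g²) = 0`; this gives `2 H¹ = 0`, and, applied to `h - ι ∘ b` where `d h = ι (d b)`,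
the injectivity of `δ`. Surjectivity is `H²(G, ℚ₂/ℤ₂) = 0`: `ι ∘ c = d h`, and `2 h` is then a
1-cocycle lifted by `h`. -/

instance : DiscreteTopology Q2Z2 :=
  QuotientAddGroup.discreteTopology (PadicInt.isOpenEmbedding_coe (p := 2)).isOpen_range

theorem two_zsmul_iota (z : ZMod 2) : (2 : ℤ) • iota z = 0 := by
  rw [← map_zsmul, two_zsmul, CharTwo.add_self_eq_zero, map_zero]

namespace GCoh

section Differential

variable {G : Type*} [Group G] {A : Type*} [AddCommGroup A]

theorem d_add (n : ℕ) (f f' : (Fin n → G) → A) : d n (f + f') = d n f + d n f' := by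
  funext g
  simp only [d, Pi.add_apply, smul_add, Finset.sum_add_distrib]
  abel

def dHom (n : ℕ) : ((Fin n → G) → A) →+ ((Fin (n + 1) → G) → A) :=
  AddMonoidHom.mk' (d n) (d_add n)

theorem d_zero (n : ℕ) : d n (0 : (Fin n → G) → A) = 0 :=
  map_zero (dHom n)

theorem d_sub (n : ℕ) (f f' : (Fin n → G) → A) : d n (f - f') = d n f - d n f' :=
  map_sub (dHom n) f f'

theorem d_zsmul (n : ℕ) (k : ℤ) (f : (Fin n → G) → A) : d n (k • f) = k • d n f :=
  map_zsmul (dHom n) k f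

theorem d_comp_addMonoidHom {B : Type*} [AddCommGroup B] (ι : A →+ B) (n : ℕ)
    (f : (Fin n → G) → A) : d n (ι ∘ f) = ι ∘ d n f := by
  funext g
  simp [d, map_sum]

theorem d_degree_zero (h : (Fin 0 → G) → A) : d 0 h = 0 := by
  funext g
  simp [d, Subsingleton.elim (fun i : Fin 0 => g i.succ) (fun i => g i.castSucc)]

theorem d_one_apply (f : (Fin 1 → G) → A) (x y : G) :
    d 1 f ![x, y] = f (fun _ => y) - f (fun _ => x * y) + f (fun _ => x) := by
  simp [d, Fin.fin_one_eq_zero, sub_eq_add_neg]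

theorem d_one_eq_zero_iff {f : (Fin 1 → G) → A} :
    d 1 f = 0 ↔ ∀ x y, f (fun _ => x * y) = f (fun _ => x) + f (fun _ => y) := by
  constructor
  · intro hf x y
    have hxy : d 1 f ![x, y] = 0 := congrFun hf _
    rw [d_one_apply] at hxy
    calc f (fun _ => x * y)
        = f (fun _ => x * y) + (f (fun _ => y) - f (fun _ => x * y) + f (fun _ => x)) := by
          rw [hxy, add_zero]
      _ = f (fun _ => x) + f (fun _ => y) := by abel
  · intro hf
    funext g
    rw [show g = ![g 0, g 1] by ext i; fin_cases i <;> rfl, d_one_apply, hf]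
    simp

theorem two_zsmul_apply_eq_zero_of_d_one_eq_zero {f : (Fin 1 → G) → A} (hf : d 1 f = 0) {g : G}
    (hg : g ^ 2 = 1) : (2 : ℤ) • f (fun _ => g) = 0 := by
  have hmul := d_one_eq_zero_iff.1 hf
  have hf1 : f (fun _ => 1) = 0 := by simpa using hmul 1 1
  rw [two_zsmul, ← hmul, ← sq, hg, hf1]

end Differential

variable {G : Type*} [Group G] [TopologicalSpace G] {A : Type*} [AddCommGroup A] [TopologicalSpace A]

theorem isCoboundary_one_iff {f : (Fin 1 → G) → A} : IsCoboundary 1 f ↔ f = 0 :=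
  ⟨fun ⟨h, _, hf⟩ => hf ▸ d_degree_zero h, fun hf => ⟨0, continuous_const, hf ▸ d_degree_zero 0⟩⟩

theorem GeneratedByInvolutions.eq_zero_of_map_mul [T1Space A] (hG : GeneratedByInvolutions G)
    {φ : G → A} (hφc : Continuous φ) (hφ : ∀ x y, φ (x * y) = φ x + φ y)
    (hinv : ∀ g : G, g ^ 2 = 1 → φ g = 0) (x : G) : φ x = 0 := by
  let K : Subgroup G := (MonoidHom.mk' (fun x => Multiplicative.ofAdd (φ x)) hφ).ker
  have hK : IsClosed (K : Set G) := isClosed_singleton.preimage hφc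
  have hinvK : Subgroup.closure {g : G | g ^ 2 = 1} ≤ K := (Subgroup.closure_le K).2 hinv
  exact closure_minimal hinvK hK (hG ▸ Set.mem_univ x)

theorem GeneratedByInvolutions.oneCocycle_eq_zero [T1Space A] (hG : GeneratedByInvolutions G)
    {f : (Fin 1 → G) → A} (hf : IsCocycle 1 f) (hinv : ∀ g : G, g ^ 2 = 1 → f (fun _ => g) = 0) :
    f = 0 := by
  funext v
  rw [show v = fun _ => v 0 from funext fun i => congrArg v (Subsingleton.elim i 0)]
  exact hG.eq_zero_of_map_mul (hf.1.comp (continuous_pi fun _ => continuous_id))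
    (d_one_eq_zero_iff.1 hf.2) hinv (v 0)

end GCoh

theorem connecting_iso_of_involutions_general
    (G : Type) [Group G] [TopologicalSpace G]
    (hGinv : GeneratedByInvolutions G)
    (hH2 : ∀ f : (Fin 2 → G) → Q2Z2, IsCocycle 2 f → IsCoboundary 2 f) :
    -- the connecting map δ : H¹(G,ℚ₂/ℤ₂) → H²(G,ℤ/2ℤ) is injective:
    -- if a lift `h` of a 1-cocycle `f` along multiplication by 2 has `d h = ι ∘ c`
    -- with `c` a coboundary, then `f` is a coboundary
    ((∀ f : (Fin 1 → G) → Q2Z2, IsCocycle 1 f →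
        ∀ h : (Fin 1 → G) → Q2Z2, Continuous h → (∀ v, (2 : ℤ) • h v = f v) →
        ∀ c : (Fin 2 → G) → ZMod 2, (∀ v, iota (c v) = d 1 h v) →
        IsCoboundary 2 c → IsCoboundary 1 f) ∧
    -- δ is surjective: every 2-cocycle with ℤ/2ℤ-coefficients is, modulo
    -- coboundaries, of the form `d h` for a continuous lift `h` of a 1-cocycle `f`
    (∀ c : (Fin 2 → G) → ZMod 2, IsCocycle 2 c →
        ∃ f h : (Fin 1 → G) → Q2Z2, IsCocycle 1 f ∧ Continuous h ∧
          (∀ v, (2 : ℤ) • h v = f v) ∧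
          ∃ b : (Fin 1 → G) → ZMod 2, Continuous b ∧
            (fun v => iota (c v - d 1 b v)) = d 1 h)) ∧
    -- multiplication by 2 is zero on H¹(G,ℚ₂/ℤ₂)
    (∀ f : (Fin 1 → G) → Q2Z2, IsCocycle 1 f →
        IsCoboundary 1 (fun v => (2 : ℤ) • f v)) := by
  refine ⟨⟨?_, ?_⟩, ?_⟩
  · rintro f hf h - hfh _ hc ⟨b, -, rfl⟩
    have hψ : d 1 (h - iota ∘ b) = 0 := by
      funext v
      simp [d_sub, d_comp_addMonoidHom, hc]
    refine isCoboundary_one_iff.2 (hGinv.oneCocycle_eq_zero hf fun g hg => ?_)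
    calc f (fun _ => g) = (2 : ℤ) • (h - iota ∘ b) (fun _ => g) := by
          simp [zsmul_sub, two_zsmul_iota, hfh]
      _ = 0 := two_zsmul_apply_eq_zero_of_d_one_eq_zero hψ hg
  · intro c hc
    have hιc : IsCocycle 2 (iota ∘ c) :=
      ⟨continuous_of_discreteTopology.comp hc.1, by rw [d_comp_addMonoidHom, hc.2]; ext; simp⟩
    obtain ⟨h, hh, hdh⟩ := hH2 _ hιc
    refine ⟨(2 : ℤ) • h, h, ⟨hh.zsmul 2, ?_⟩, hh, fun _ => rfl, 0, continuous_const, ?_⟩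
    · rw [d_zsmul, hdh]
      funext v
      exact two_zsmul_iota (c v)
    · simp [d_zero, hdh, Function.comp_def]
  · intro f hf
    refine isCoboundary_one_iff.2 (hGinv.oneCocycle_eq_zero ⟨hf.1.zsmul 2, ?_⟩ fun g hg => ?_)
    · show d 1 ((2 : ℤ) • f) = 0
      rw [d_zsmul, hf.2, smul_zero]
    · exact two_zsmul_apply_eq_zero_of_d_one_eq_zero hf.2 hg

theorem connecting_iso_of_involutions
    (G : Type) [Group G] [TopologicalSpace G]
    (hG : IsProP 2 G) (hGinv : GeneratedByInvolutions G)
    (hH2 : ∀ f : (Fin 2 → G) → Q2Z2, IsCocycle 2 f → IsCoboundary 2 f) :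
    -- the connecting map δ : H¹(G,ℚ₂/ℤ₂) → H²(G,ℤ/2ℤ) is injective:
    -- if a lift `h` of a 1-cocycle `f` along multiplication by 2 has `d h = ι ∘ c`
    -- with `c` a coboundary, then `f` is a coboundary
    ((∀ f : (Fin 1 → G) → Q2Z2, IsCocycle 1 f →
        ∀ h : (Fin 1 → G) → Q2Z2, Continuous h → (∀ v, (2 : ℤ) • h v = f v) →
        ∀ c : (Fin 2 → G) → ZMod 2, (∀ v, iota (c v) = d 1 h v) →
        IsCoboundary 2 c → IsCoboundary 1 f) ∧
    -- δ is surjective: every 2-cocycle with ℤ/2ℤ-coefficients is, modulo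
    -- coboundaries, of the form `d h` for a continuous lift `h` of a 1-cocycle `f`
    (∀ c : (Fin 2 → G) → ZMod 2, IsCocycle 2 c →
        ∃ f h : (Fin 1 → G) → Q2Z2, IsCocycle 1 f ∧ Continuous h ∧
          (∀ v, (2 : ℤ) • h v = f v) ∧
          ∃ b : (Fin 1 → G) → ZMod 2, Continuous b ∧
            (fun v => iota (c v - d 1 b v)) = d 1 h)) ∧
    -- multiplication by 2 is zero on H¹(G,ℚ₂/ℤ₂)
    (∀ f : (Fin 1 → G) → Q2Z2, IsCocycle 1 f →
        IsCoboundary 1 (fun v => (2 : ℤ) • f v)) :=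
  connecting_iso_of_involutions_general G hGinv hH2
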